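/- Let n ≥ 1 and let x_1 > x_2 > ⋯ > x_k be the zeros of P_{n−1} in (0,∞) and y_1 > y_2 > ⋯ be the zeros of P_n in (0,∞). Then the zeros interlace: y_1 > x_1, and x_j < y_j < x_{j−1} for 2 ≤ j ≤ k; moreover, when n ≡ 0 (mod 3) or n ≡ 2 (mod 3) there is an additional zero y_{k+1} of P_n with 0 < y_{k+1} < x_k. -/

import Mathlib

/-!
On the real line `P n` is the real polynomial `Q n`, where `Q (n + 1) = X² Q n − (Q n)' / 3`, and
`(Q n · e^{-t³})' = −3 Q (n + 1) e^{-t³}`. Since `Q n · e^{-t³}` vanishes at the roots of `Q n`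
and tends to `0` at `+∞`, Rolle's theorem puts a root of `Q (n + 1)` above the largest positive
root of `Q n` and one in each gap between consecutive nonnegative roots; `0` is a root of `Q n`
exactly when `n ≢ 0 (mod 3)`. This gives `Q (n + 1)` at least `⌊2(n + 1)/3⌋` positive roots
once `Q n` has `⌊2n/3⌋` of them. Conversely, `Q n` only has monomials `X ^ i` with
`i ≡ 2n (mod 3)`, so rotating its positive roots by the cube roots of unity gives three times
as many complex roots, and there are at most `⌊2n/3⌋` of them. Hence the Rolle roots are all
the positive roots of `Q (n + 1)`, which is the interlacing.
-/

/-- The primitive third root of unity `ω = exp(2πi/3)`. -/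
noncomputable def ω : ℂ := Complex.exp (2 * Real.pi * Complex.I / 3)

/-- The diagonal multiple orthogonal polynomial
`P n x = (−1)ⁿ 3⁻ⁿ e^{x³} (d/dx)ⁿ e^{−x³}` (that is, `P_{n,n}` for the
exponential cubic weight). -/
noncomputable def P (n : ℕ) : ℂ → ℂ := fun x =>
  (-1) ^ n / 3 ^ n * Complex.exp (x ^ 3) *
    iteratedDeriv n (fun z => Complex.exp (-z ^ 3)) x

open Polynomial Filter Set Topology Finset

lemma Finset.card_eq_of_injective_of_mem_iff {α : Type*} {s : Finset α} {k : ℕ} {f : Fin k → α}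
    (hf : Function.Injective f) (hs : ∀ t, t ∈ s ↔ ∃ i, f i = t) : #s = k := by
  classical
  have : s = univ.image f := by ext t; simp [hs]
  rw [this, card_image_of_injective _ hf, card_univ, Fintype.card_fin]

lemma StrictAnti.eq_of_forall_mem_range {α : Type*} [Preorder α] {l : ℕ} {f g : Fin l → α}
    (hf : StrictAnti f) (hg : StrictAnti g) (hfg : ∀ j, f j ∈ Set.range g) : f = g := by
  refine (hf.range_inj hg).1 (Set.eq_of_subset_of_ncard_le (Set.range_subset_iff.2 hfg) ?_
    (Set.finite_range g))
  rw [Set.ncard_range_of_injective hf.injective, Set.ncard_range_of_injective hg.injective]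

lemma aeval_ofReal_complex (p : ℝ[X]) (t : ℝ) : aeval (t : ℂ) p = p.eval t :=
  aeval_ofReal p t

lemma aeval_mul_of_pow_eq_one {R A : Type*} [CommSemiring R] [CommSemiring A] [Algebra R A]
    {p : R[X]} {d r : ℕ} (hp : ∀ i, p.coeff i ≠ 0 → i % d = r) {ζ : A} (hζ : ζ ^ d = 1) (z : A) :
    aeval (ζ * z) p = ζ ^ r * aeval z p := by
  rw [aeval_eq_sum_range, aeval_eq_sum_range, Finset.mul_sum]
  refine Finset.sum_congr rfl fun i _ => ?_
  by_cases hi : p.coeff i = 0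
  · simp [hi]
  · rw [mul_pow, pow_eq_pow_mod i hζ, hp i hi, mul_smul_comm]

noncomputable def posRoots (p : ℝ[X]) : Finset ℝ := p.roots.toFinset.filter (0 < ·)

lemma mem_posRoots {p : ℝ[X]} (hp : p ≠ 0) {t : ℝ} : t ∈ posRoots p ↔ 0 < t ∧ p.IsRoot t := by
  rw [posRoots, mem_filter, Multiset.mem_toFinset, mem_roots hp, and_comm]

/-- The rotations `t ↦ ζ ^ a * t` by the `d`-th roots of unity send the positive roots to `d`
disjoint sets of complex roots. -/
lemma card_posRoots_mul_le_natDegree {p : ℝ[X]} (hp0 : p ≠ 0) {d r : ℕ} (hd : d ≠ 0)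
    (hp : ∀ i, p.coeff i ≠ 0 → i % d = r) : #(posRoots p) * d ≤ p.natDegree := by
  set ζ : ℂ := Complex.exp (2 * Real.pi * Complex.I / d)
  have hζ : IsPrimitiveRoot ζ d := Complex.isPrimitiveRoot_exp d hd
  set f : ℝ × Fin d → ℂ := fun q => ζ ^ (q.2 : ℕ) * q.1
  set S : Finset (ℝ × Fin d) := posRoots p ×ˢ Finset.univ
  have hinj : Set.InjOn f S := by
    rintro ⟨t, a⟩ ht ⟨s, b⟩ hs hf
    simp only [S, coe_product, Set.mem_prod, mem_coe, mem_posRoots hp0] at ht hs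
    have hts : t = s := by
      simpa [f, norm_mul, norm_pow, hζ.norm'_eq_one hd, abs_of_pos ht.1.1, abs_of_pos hs.1.1]
        using congrArg norm hf
    subst hts
    have hab : ζ ^ (a : ℕ) = ζ ^ (b : ℕ) :=
      mul_right_cancel₀ (Complex.ofReal_ne_zero.mpr ht.1.1.ne') hf
    simp [Fin.ext (hζ.pow_inj a.2 b.2 hab)]
  have hmaps : Set.MapsTo f S ↑(p.map (algebraMap ℝ ℂ)).roots.toFinset := by
    rintro ⟨t, a⟩ ht
    simp only [S, coe_product, Set.mem_prod, mem_coe, mem_posRoots hp0] at ht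
    have hroot : aeval (t : ℂ) p = 0 := by
      rw [aeval_ofReal_complex, ht.1.2, Complex.ofReal_zero]
    rw [mem_coe, Multiset.mem_toFinset, mem_roots (map_ne_zero hp0), IsRoot, eval_map_algebraMap,
      aeval_mul_of_pow_eq_one hp (by rw [← pow_mul, mul_comm, pow_mul, hζ.pow_eq_one, one_pow]),
      hroot, mul_zero]
  calc #(posRoots p) * d = #S := by simp [S]
    _ ≤ #(p.map (algebraMap ℝ ℂ)).roots.toFinset := card_le_card_of_injOn f hmaps hinj
    _ ≤ Multiset.card (p.map (algebraMap ℝ ℂ)).roots := Multiset.toFinset_card_le _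
    _ ≤ (p.map (algebraMap ℝ ℂ)).natDegree := card_roots' _
    _ = p.natDegree := natDegree_map _

/-- By Darboux's theorem a nonvanishing `f'` has constant sign, so `f` would be strictly monotone
on `[a, ∞)` and could not tend to `f a`. -/
theorem exists_hasDerivAt_eq_zero_Ioi {f f' : ℝ → ℝ} {a : ℝ} (hf : ContinuousOn f (Ici a))
    (hff' : ∀ x ∈ Ioi a, HasDerivAt f (f' x) x) (hlim : Tendsto f atTop (𝓝 (f a))) :
    ∃ c ∈ Ioi a, f' c = 0 := by
  by_contra! h
  have hderiv : ∀ x ∈ interior (Ici a), HasDerivWithinAt f (f' x) (interior (Ici a)) x := by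
    rw [interior_Ici]; exact fun x hx => (hff' x hx).hasDerivWithinAt
  have ha : a ∈ Ici a := self_mem_Ici
  have ha1 : a + 1 ∈ Ici a := by simp
  rcases hasDerivWithinAt_forall_lt_or_forall_gt_of_forall_ne (convex_Ioi a)
    (fun x hx => (hff' x hx).hasDerivWithinAt) h with hneg | hpos
  · have hanti := strictAntiOn_of_hasDerivWithinAt_neg (convex_Ici a) hf hderiv
      (by rwa [interior_Ici])
    have : f a ≤ f (a + 1) := le_of_tendsto hlim <| (eventually_ge_atTop (a + 1)).mono
      fun x hx => hanti.antitoneOn ha1 (show a ≤ x by linarith) hx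
    linarith [hanti ha ha1 (by linarith)]
  · have hmono := strictMonoOn_of_hasDerivWithinAt_pos (convex_Ici a) hf hderiv
      (by rwa [interior_Ici])
    have : f (a + 1) ≤ f a := ge_of_tendsto hlim <| (eventually_ge_atTop (a + 1)).mono
      fun x hx => hmono.monotoneOn ha1 (show a ≤ x by linarith) hx
    linarith [hmono ha ha1 (by linarith)]

lemma tendsto_eval_mul_exp_neg_cube (p : ℝ[X]) :
    Tendsto (fun t => p.eval t * Real.exp (-t ^ 3)) atTop (𝓝 0) := by
  set d := p.natDegree
  have hp : (fun t => p.eval t) =O[atTop] fun t => (X ^ (3 * d) : ℝ[X]).eval t :=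
    isBigO_atTop_of_degree_le _ _ (by
      rw [degree_X_pow]
      exact degree_le_natDegree.trans (by exact_mod_cast (Nat.le_mul_of_pos_left d (by norm_num))))
  have hlim : Tendsto (fun t : ℝ => (t ^ 3) ^ d * Real.exp (-t ^ 3)) atTop (𝓝 0) :=
    (Real.tendsto_pow_mul_exp_neg_atTop_nhds_zero d).comp (tendsto_pow_atTop (by norm_num))
  refine (hp.mul (Asymptotics.isBigO_refl (fun t => Real.exp (-t ^ 3)) atTop)).trans_tendsto ?_
  simpa [← pow_mul] using hlim

/-- `b 0 > a 0 > b 1 > a 1 > ⋯` -/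
def Interlaces {k l : ℕ} (a : Fin k → ℝ) (b : Fin l → ℝ) : Prop :=
  ∀ (i : Fin k) (j : Fin l), ((j : ℕ) ≤ i → a i < b j) ∧ ((i : ℕ) < j → b j < a i)

lemma Interlaces.strictAnti {K : ℕ} {a b : Fin K → ℝ} (h : Interlaces a b) : StrictAnti b :=
  fun i j hij => ((h i j).2 hij).trans ((h i i).1 le_rfl)

noncomputable def Q : ℕ → ℝ[X]
  | 0 => 1
  | n + 1 => X ^ 2 * Q n - C 3⁻¹ * derivative (Q n)

lemma natDegree_Q_le (n : ℕ) : (Q n).natDegree ≤ 2 * n := by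
  induction n with
  | zero => simp [Q]
  | succ n ih =>
    refine (natDegree_sub_le _ _).trans (max_le ?_ ?_)
    · exact natDegree_mul_le.trans (by rw [natDegree_X_pow]; omega)
    · have := natDegree_derivative_le (Q n)
      exact natDegree_mul_le.trans (by rw [natDegree_C]; omega)

lemma coeff_Q_two_mul (n : ℕ) : (Q n).coeff (2 * n) = 1 := by
  induction n with
  | zero => simp [Q]
  | succ n ih =>
    have hdeg : (derivative (Q n)).natDegree < 2 * (n + 1) := by
      have := natDegree_derivative_le (Q n)
      have := natDegree_Q_le n
      omega
    rw [Q, coeff_sub, coeff_C_mul, coeff_eq_zero_of_natDegree_lt hdeg,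
      show 2 * (n + 1) = 2 * n + 2 by ring, coeff_X_pow_mul, ih, mul_zero, sub_zero]

lemma Q_ne_zero (n : ℕ) : Q n ≠ 0 := fun h => by simpa [h] using coeff_Q_two_mul n

lemma coeff_Q_eq_zero {n i : ℕ} (hi : i % 3 ≠ 2 * n % 3) : (Q n).coeff i = 0 := by
  induction n generalizing i with
  | zero => rw [Q, coeff_one, if_neg (by omega)]
  | succ n ih =>
    rw [Q, coeff_sub, coeff_C_mul, coeff_derivative, ih (i := i + 1) (by omega), coeff_X_pow_mul']
    split_ifs
    · rw [ih (by omega)]; ring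
    · ring

lemma isRoot_Q_zero {n : ℕ} (hn : n % 3 ≠ 0) : (Q n).IsRoot 0 := by
  rw [IsRoot, ← coeff_zero_eq_eval_zero]
  exact coeff_Q_eq_zero (by omega)

lemma hasDerivAt_aeval_Q_mul_cexp (n : ℕ) (z : ℂ) :
    HasDerivAt (fun w => aeval w (Q n) * Complex.exp (-w ^ 3))
      (-3 * (aeval z (Q (n + 1)) * Complex.exp (-z ^ 3))) z := by
  have hexp : HasDerivAt (fun w : ℂ => Complex.exp (-w ^ 3))
      (Complex.exp (-z ^ 3) * -(3 * z ^ 2)) z := by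
    simpa using ((hasDerivAt_pow 3 z).neg).cexp
  refine ((Polynomial.hasDerivAt_aeval (Q n) z).fun_mul hexp).congr_deriv ?_
  simp only [Q, map_sub, map_mul, map_pow, aeval_X, aeval_C]
  norm_num
  ring

lemma iteratedDeriv_cexp_neg_cube (n : ℕ) :
    iteratedDeriv n (fun z : ℂ => Complex.exp (-z ^ 3))
      = fun z => (-3) ^ n * (aeval z (Q n) * Complex.exp (-z ^ 3)) := by
  induction n with
  | zero => simp [Q]
  | succ n ih =>
    ext z
    rw [iteratedDeriv_succ, ih, ((hasDerivAt_aeval_Q_mul_cexp n z).const_mul _).deriv]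
    ring

lemma P_ofReal (n : ℕ) (t : ℝ) : P n t = (Q n).eval t := by
  have hexp : Complex.exp ((t : ℂ) ^ 3) * Complex.exp (-(t : ℂ) ^ 3) = 1 := by
    rw [← Complex.exp_add, add_neg_cancel, Complex.exp_zero]
  have hsign : (-1 : ℂ) ^ n / 3 ^ n * (-3) ^ n = 1 := by
    rw [← mul_div_right_comm, ← mul_pow]; norm_num
  rw [P, iteratedDeriv_cexp_neg_cube]
  simp only [aeval_ofReal_complex]
  linear_combination (((Q n).eval t : ℝ) : ℂ) *
    ((Complex.exp ((t : ℂ) ^ 3) * Complex.exp (-(t : ℂ) ^ 3)) * hsign + hexp)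

lemma mem_posRoots_Q_iff {n k : ℕ} {x : Fin k → ℝ} (hpos : ∀ i, 0 < x i)
    (hzero : ∀ i, P n (x i) = 0) (hall : ∀ t : ℝ, 0 < t → P n t = 0 → ∃ i, x i = t) (t : ℝ) :
    t ∈ posRoots (Q n) ↔ ∃ i, x i = t := by
  simp only [mem_posRoots (Q_ne_zero n), IsRoot, ← Complex.ofReal_eq_zero, ← P_ofReal]
  exact ⟨fun h => hall t h.1 h.2, fun ⟨i, hi⟩ => hi ▸ ⟨hpos i, hzero i⟩⟩

lemma hasDerivAt_eval_Q_mul_exp (n : ℕ) (t : ℝ) :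
    HasDerivAt (fun s => (Q n).eval s * Real.exp (-s ^ 3))
      (-3 * ((Q (n + 1)).eval t * Real.exp (-t ^ 3))) t := by
  simpa [← Complex.ofReal_pow, ← Complex.ofReal_neg, Complex.exp_ofReal_re, aeval_ofReal_complex]
    using (hasDerivAt_aeval_Q_mul_cexp n t).real_of_complex

lemma exists_isRoot_Q_succ_mem_Ioo {n : ℕ} {a b : ℝ} (hab : a < b) (ha : (Q n).IsRoot a)
    (hb : (Q n).IsRoot b) : ∃ c ∈ Ioo a b, (Q (n + 1)).IsRoot c := by
  obtain ⟨c, hc, hc0⟩ := exists_hasDerivAt_eq_zero hab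
    (by fun_prop) (by simp [ha.eq_zero, hb.eq_zero]) fun x _ => hasDerivAt_eval_Q_mul_exp n x
  exact ⟨c, hc, by simpa [Real.exp_ne_zero] using hc0⟩

lemma exists_isRoot_Q_succ_mem_Ioi {n : ℕ} {a : ℝ} (ha : (Q n).IsRoot a) :
    ∃ c ∈ Ioi a, (Q (n + 1)).IsRoot c := by
  obtain ⟨c, hc, hc0⟩ := exists_hasDerivAt_eq_zero_Ioi (a := a) (by fun_prop)
    (fun x _ => hasDerivAt_eval_Q_mul_exp n x)
    (by simpa [ha.eq_zero] using tendsto_eval_mul_exp_neg_cube (Q n))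
  exact ⟨c, hc, by simpa [Real.exp_ne_zero] using hc0⟩

lemma exists_interlacing_roots_Q_succ {n K : ℕ} (a : Fin K → ℝ) (ha : StrictAnti a)
    (hroot : ∀ i, (Q n).IsRoot (a i)) :
    ∃ b : Fin K → ℝ, (∀ j, (Q (n + 1)).IsRoot (b j)) ∧ Interlaces a b := by
  have H : ∀ j : Fin K, ∃ c, (Q (n + 1)).IsRoot c ∧ a j < c ∧ ∀ i < j, c < a i := by
    intro j
    rcases Nat.eq_zero_or_pos j with hj | hj
    · obtain ⟨c, hc, hcroot⟩ := exists_isRoot_Q_succ_mem_Ioi (hroot j)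
      exact ⟨c, hcroot, hc, fun i hi => absurd hi (by simp [Fin.lt_def, hj])⟩
    · set j' : Fin K := ⟨j - 1, by omega⟩
      have hj' : j' < j := by rw [Fin.lt_def]; simp only [j']; omega
      obtain ⟨c, hc, hcroot⟩ := exists_isRoot_Q_succ_mem_Ioo (ha hj') (hroot j) (hroot j')
      refine ⟨c, hcroot, hc.1, fun i hi => hc.2.trans_le (ha.antitone ?_)⟩
      rw [Fin.le_def, Fin.lt_def] at *
      simp only [j']
      omega
  choose b hb using H
  exact ⟨b, fun j => (hb j).1, fun i j =>
    ⟨fun hji => (ha.antitone hji).trans_lt (hb j).2.1, fun hij => (hb j).2.2 i hij⟩⟩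

lemma exists_posRoots_Q_succ_interlacing {m k l : ℕ} (hk : k = 2 * m / 3)
    (hl : l = 2 * (m + 1) / 3) (x : Fin k → ℝ) (hx : StrictAnti x) (hxpos : ∀ i, 0 < x i)
    (hxroot : ∀ i, (Q m).IsRoot (x i)) :
    ∃ y : Fin l → ℝ, StrictAnti y ∧ (∀ j, y j ∈ posRoots (Q (m + 1))) ∧ Interlaces x y := by
  have hlk : l = k ∨ (l = k + 1 ∧ m % 3 ≠ 0) := by omega
  -- `x`, followed by the root `0` of `Q m` when `l = k + 1`
  set a : Fin l → ℝ := fun j => if h : (j : ℕ) < k then x ⟨j, h⟩ else 0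
  have ha_of_lt {j : Fin l} (h : (j : ℕ) < k) : a j = x ⟨j, h⟩ := dif_pos h
  have ha_of_ge {j : Fin l} (h : ¬ (j : ℕ) < k) : a j = 0 := dif_neg h
  have ha : StrictAnti a := by
    intro i j hij
    have hi : (i : ℕ) < k := by rw [Fin.lt_def] at hij; omega
    rw [ha_of_lt hi]
    by_cases hj : (j : ℕ) < k
    · exact ha_of_lt hj ▸ hx hij
    · exact ha_of_ge hj ▸ hxpos _
  have haroot (j : Fin l) : (Q m).IsRoot (a j) := by
    by_cases hj : (j : ℕ) < k
    · exact ha_of_lt hj ▸ hxroot _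
    · exact ha_of_ge hj ▸ isRoot_Q_zero (by omega)
  have ha_nonneg (j : Fin l) : 0 ≤ a j := by
    by_cases hj : (j : ℕ) < k
    · exact ha_of_lt hj ▸ (hxpos _).le
    · exact (ha_of_ge hj).ge
  obtain ⟨y, hyroot, hy⟩ := exists_interlacing_roots_Q_succ a ha haroot
  refine ⟨y, hy.strictAnti, fun j => (mem_posRoots (Q_ne_zero _)).2
    ⟨(ha_nonneg j).trans_lt ((hy j j).1 le_rfl), hyroot j⟩, fun i j => ?_⟩
  have hi : ((⟨i, by omega⟩ : Fin l) : ℕ) < k := i.2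
  simpa [ha_of_lt hi] using hy ⟨i, by omega⟩ j

lemma card_posRoots_Q (n : ℕ) : #(posRoots (Q n)) = 2 * n / 3 := by
  induction n with
  | zero => simp [posRoots, Q]
  | succ m ih =>
    refine le_antisymm ?_ ?_
    · have hlac : ∀ i, (Q (m + 1)).coeff i ≠ 0 → i % 3 = 2 * (m + 1) % 3 :=
        fun i hi => by_contra fun h => hi (coeff_Q_eq_zero h)
      have := card_posRoots_mul_le_natDegree (Q_ne_zero _) three_ne_zero hlac
      have := natDegree_Q_le (m + 1)
      omega
    · set s := posRoots (Q m)
      have hs (i : Fin #s) : s.orderEmbOfFin rfl i.rev ∈ s := s.orderEmbOfFin_mem rfl _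
      obtain ⟨y, hy, hymem, -⟩ := exists_posRoots_Q_succ_interlacing ih rfl
        (fun i => s.orderEmbOfFin rfl i.rev)
        ((s.orderEmbOfFin rfl).strictMono.comp_strictAnti Fin.rev_strictAnti)
        (fun i => ((mem_posRoots (Q_ne_zero m)).1 (hs i)).1)
        (fun i => ((mem_posRoots (Q_ne_zero m)).1 (hs i)).2)
      simpa using card_le_card_of_injOn (s := univ) y (fun j _ => hymem j) hy.injective.injOn

/-- **interlacing.** Let `n ≥ 1`, let `x 0 > x 1 > ⋯ > x (k-1)` be
all the zeros of `P_{n−1}` in `(0,∞)` and `y 0 > y 1 > ⋯ > y (l-1)` all the zeros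
of `Pₙ` in `(0,∞)` (both listed in decreasing order, so `x j` is the zero
`x_{j+1}` of the paper). Then for every `j < k` the zero `y j` exists and
`y j > x j`, while `y j < x (j−1)` for `j ≥ 1`; moreover if `n ≡ 0` or
`n ≡ 2 (mod 3)` there is an additional zero `y k` with `0 < y k` smaller than
every `x i` (i.e. `0 < y_{k+1} < x_k` in the paper's notation). -/
theorem stmt14 (n : ℕ) (hn : 1 ≤ n) (k l : ℕ) (x : Fin k → ℝ) (y : Fin l → ℝ)
    (hxpos : ∀ i, 0 < x i) (hxzero : ∀ i, P (n - 1) ((x i : ℝ) : ℂ) = 0)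
    (hxall : ∀ t : ℝ, 0 < t → P (n - 1) (t : ℂ) = 0 → ∃ i, x i = t)
    (hxanti : StrictAnti x)
    (hypos : ∀ i, 0 < y i) (hyzero : ∀ i, P n ((y i : ℝ) : ℂ) = 0)
    (hyall : ∀ t : ℝ, 0 < t → P n (t : ℂ) = 0 → ∃ i, y i = t)
    (hyanti : StrictAnti y) :
    (∀ (j : ℕ) (hjk : j < k), ∃ hjl : j < l,
      x ⟨j, hjk⟩ < y ⟨j, hjl⟩ ∧
      ∀ hj1 : 1 ≤ j, y ⟨j, hjl⟩ < x ⟨j - 1, by omega⟩) ∧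
    ((n % 3 = 0 ∨ n % 3 = 2) → ∃ hkl : k < l,
      0 < y ⟨k, hkl⟩ ∧ ∀ i : Fin k, y ⟨k, hkl⟩ < x i) := by
  obtain ⟨m, rfl⟩ : ∃ m, n = m + 1 := ⟨n - 1, by omega⟩
  rw [Nat.add_sub_cancel] at hxzero hxall
  have hx := mem_posRoots_Q_iff hxpos hxzero hxall
  have hy := mem_posRoots_Q_iff hypos hyzero hyall
  have hk : k = 2 * m / 3 :=
    (card_eq_of_injective_of_mem_iff hxanti.injective hx).symm.trans (card_posRoots_Q m)
  have hl : l = 2 * (m + 1) / 3 :=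
    (card_eq_of_injective_of_mem_iff hyanti.injective hy).symm.trans (card_posRoots_Q (m + 1))
  obtain ⟨z, hz, hzmem, hxz⟩ := exists_posRoots_Q_succ_interlacing hk hl x hxanti hxpos
    fun i => ((mem_posRoots (Q_ne_zero m)).1 ((hx _).2 ⟨i, rfl⟩)).2
  obtain rfl : z = y := hz.eq_of_forall_mem_range hyanti fun j => (hy _).1 (hzmem j)
  refine ⟨fun j hjk => ⟨by omega, (hxz _ _).1 le_rfl, fun _ => (hxz _ _).2 (by simp; omega)⟩,
    fun _ => ⟨by omega, hypos _, fun i => (hxz i _).2 i.2⟩⟩
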